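/- arXiv:math/9811024 — 2 statements merged into one kernel-verified Lean document; each statement's English description precedes it below -/
import Mathlib

section
/- Let n ≥ 2, let Q₀: [0,∞) → ℝ be smooth and positive with Q₀(0) > 0, set Q(μ) = μ^{n-1} Q₀(μ), and let R: (0,∞) → ℝ be of the form R(μ) = n(n−1)/μ + r(μ) with r smooth on [0,∞). Let c ∈ ℝ and define φ(μ) = (2/Q(μ)) ∫₀^μ (R(x) − c)(μ − x) Q(x) dx for μ > 0. Then φ extends continuously to μ = 0 with φ(0) = 0 and is differentiable at 0 with φ'(0) = 2. -/
open Filter intervalIntegral MeasureTheory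

lemma key_int (m : ℕ) (μ : ℝ) :
    ∫ x in (0:ℝ)..μ, (μ - x) * x ^ m = μ ^ (m + 2) / ((m + 1) * (m + 2)) := by
  have h : ∀ x : ℝ, (μ - x) * x ^ m = μ * x ^ m - x ^ (m + 1) := by intro x; ring
  simp_rw [h]
  rw [intervalIntegral.integral_sub (f := fun x => μ * x ^ m) (g := fun x => x ^ (m + 1)) ((continuous_const.mul (continuous_pow m)).intervalIntegrable _ _)
      ((continuous_pow (m+1)).intervalIntegrable _ _),
    intervalIntegral.integral_const_mul, integral_pow, integral_pow]
  have h1 : ((m:ℝ) + 1) ≠ 0 := by positivity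
  have h2 : ((m:ℝ) + 1 + 1) ≠ 0 := by positivity
  field_simp
  push_cast
  ring

lemma core (m : ℕ) (g : ℝ → ℝ) (hg : Continuous g) :
    Tendsto (fun μ => (∫ x in (0:ℝ)..μ, g x * ((μ - x) * x ^ m)) / μ ^ (m + 2))
      (nhdsWithin 0 (Set.Ioi 0)) (nhds (g 0 / ((m + 1) * (m + 2)))) := by
  have hd : (1:ℝ) ≤ ((m:ℝ) + 1) * ((m:ℝ) + 2) := by nlinarith [Nat.cast_nonneg (α := ℝ) m]
  have hd0 : (0:ℝ) < ((m:ℝ) + 1) * ((m:ℝ) + 2) := by positivity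
  rw [Metric.tendsto_nhdsWithin_nhds]
  intro ε hε
  obtain ⟨δ, hδ, hδ'⟩ := Metric.continuousAt_iff.mp hg.continuousAt (ε / 2) (by linarith)
  refine ⟨δ, hδ, fun μ hμ hμδ => ?_⟩
  have hμ0 : (0:ℝ) < μ := hμ
  have hμp : (0:ℝ) < μ ^ (m + 2) := by positivity
  have hbd : ∀ x ∈ Set.Icc (0:ℝ) μ, |g x - g 0| ≤ ε / 2 := by
    intro x hx
    have hxd : dist x 0 < δ := by
      rw [Real.dist_eq, sub_zero, abs_of_nonneg hx.1]
      rw [Real.dist_eq, sub_zero, abs_of_pos hμ0] at hμδ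
      linarith [hx.2]
    have := hδ' hxd
    rw [Real.dist_eq] at this
    linarith
  have hw : ∀ x ∈ Set.Icc (0:ℝ) μ, 0 ≤ (μ - x) * x ^ m := fun x hx =>
    mul_nonneg (by linarith [hx.2]) (pow_nonneg hx.1 m)
  have cw : Continuous fun x : ℝ => (μ - x) * x ^ m :=
    (continuous_const.sub continuous_id).mul (continuous_pow m)
  have i1 : IntervalIntegrable (fun x => (g x - g 0) * ((μ - x) * x ^ m)) volume 0 μ :=
    ((hg.sub continuous_const).mul cw).intervalIntegrable _ _
  have i3 : IntervalIntegrable (fun x => (ε / 2) * ((μ - x) * x ^ m)) volume 0 μ :=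
    (continuous_const.mul cw).intervalIntegrable _ _
  have hsub : ∫ x in (0:ℝ)..μ, (g x - g 0) * ((μ - x) * x ^ m) =
      (∫ x in (0:ℝ)..μ, g x * ((μ - x) * x ^ m)) -
        g 0 * (μ ^ (m + 2) / ((m + 1) * (m + 2))) := by
    have hfe : (fun x => (g x - g 0) * ((μ - x) * x ^ m)) =
        fun x => g x * ((μ - x) * x ^ m) - g 0 * ((μ - x) * x ^ m) := by
      funext x; ring
    rw [hfe, intervalIntegral.integral_sub (f := fun x => g x * ((μ - x) * x ^ m))
      (g := fun x => g 0 * ((μ - x) * x ^ m)) ((hg.mul cw).intervalIntegrable _ _)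
      ((continuous_const.mul cw).intervalIntegrable _ _),
      intervalIntegral.integral_const_mul, key_int]
  -- bound on the integral
  have habs : |∫ x in (0:ℝ)..μ, (g x - g 0) * ((μ - x) * x ^ m)| ≤
      (ε / 2) * (μ ^ (m + 2) / ((m + 1) * (m + 2))) := by
    calc |∫ x in (0:ℝ)..μ, (g x - g 0) * ((μ - x) * x ^ m)|
        ≤ ∫ x in (0:ℝ)..μ, |(g x - g 0) * ((μ - x) * x ^ m)| :=
          intervalIntegral.abs_integral_le_integral_abs hμ0.le
      _ ≤ ∫ x in (0:ℝ)..μ, (ε / 2) * ((μ - x) * x ^ m) := by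
          apply intervalIntegral.integral_mono_on hμ0.le i1.abs i3
          intro x hx
          rw [abs_mul, abs_of_nonneg (hw x hx)]
          exact mul_le_mul_of_nonneg_right (hbd x hx) (hw x hx)
      _ = (ε / 2) * (μ ^ (m + 2) / ((m + 1) * (m + 2))) := by
          rw [intervalIntegral.integral_const_mul, key_int]
  rw [Real.dist_eq]
  have heq : (∫ x in (0:ℝ)..μ, g x * ((μ - x) * x ^ m)) / μ ^ (m + 2) -
      g 0 / ((m + 1) * (m + 2)) =
      (∫ x in (0:ℝ)..μ, (g x - g 0) * ((μ - x) * x ^ m)) / μ ^ (m + 2) := by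
    rw [hsub]; field_simp
  rw [heq, abs_div, abs_of_pos hμp, div_lt_iff₀ hμp]
  have h1 : (ε / 2) * (μ ^ (m + 2) / ((m + 1) * (m + 2))) ≤ (ε / 2) * μ ^ (m + 2) := by
    apply mul_le_mul_of_nonneg_left _ (by linarith)
    rw [div_le_iff₀ hd0]
    nlinarith
  nlinarith





/-- In the vector bundle case, with Q(μ) = μ^{n-1}Q₀(μ) (Q₀ smooth
positive) and R(μ) = n(n−1)/μ + r(μ), the profile
φ(μ) = (2/Q(μ))∫₀^μ(R(x)−c)(μ−x)Q(x)dx extends continuously to 0 with φ(0) = 0 and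
has right derivative 2 at 0. -/
theorem stmt_15 (n : ℕ) (hn : 2 ≤ n) (Q₀ r : ℝ → ℝ)
    (hQ₀ : ContDiff ℝ (⊤ : ℕ∞) Q₀) (hQ₀pos : ∀ μ ≥ (0:ℝ), 0 < Q₀ μ)
    (hr : ContDiff ℝ (⊤ : ℕ∞) r)
    (Q R : ℝ → ℝ)
    (hQ : ∀ μ, Q μ = μ ^ (n - 1) * Q₀ μ)
    (hR : ∀ μ > (0:ℝ), R μ = (n : ℝ) * (n - 1) / μ + r μ)
    (c : ℝ) (φ : ℝ → ℝ)
    (hφ : ∀ μ > (0:ℝ), φ μ =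
      (2 / Q μ) * ∫ x in (0:ℝ)..μ, (R x - c) * (μ - x) * Q x) :
    Tendsto φ (nhdsWithin 0 (Set.Ioi 0)) (nhds 0) ∧
      Tendsto (fun μ => φ μ / μ) (nhdsWithin 0 (Set.Ioi 0)) (nhds 2) := by
  obtain ⟨m, rfl⟩ : ∃ m, n = m + 2 := ⟨n - 2, by omega⟩
  set g : ℝ → ℝ := fun x => (((m:ℝ) + 2) * ((m:ℝ) + 1) + (r x - c) * x) * Q₀ x with hgdef
  have hgc : Continuous g :=
    (continuous_const.add ((hr.continuous.sub continuous_const).mul continuous_id)).mul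
      hQ₀.continuous
  -- rewrite the integral
  have hInt : ∀ μ > (0:ℝ), (∫ x in (0:ℝ)..μ, (R x - c) * (μ - x) * Q x) =
      ∫ x in (0:ℝ)..μ, g x * ((μ - x) * x ^ m) := by
    intro μ hμ
    apply intervalIntegral.integral_congr_ae
    filter_upwards with x hx
    rw [Set.uIoc_of_le hμ.le] at hx
    have hx0 : 0 < x := hx.1
    rw [hR x hx0, hQ x, hgdef]
    have hxne : x ≠ 0 := ne_of_gt hx0
    push_cast
    rw [pow_succ]
    field_simp
    ring
  -- φ μ / μ in terms of core quantity
  have hQ₀0 : Q₀ 0 ≠ 0 := ne_of_gt (hQ₀pos 0 le_rfl)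
  have key2 : Tendsto (fun μ => φ μ / μ) (nhdsWithin 0 (Set.Ioi 0)) (nhds 2) := by
    have T := core m g hgc
    have TQ : Tendsto Q₀ (nhdsWithin 0 (Set.Ioi 0)) (nhds (Q₀ 0)) :=
      (hQ₀.continuous.tendsto 0).mono_left nhdsWithin_le_nhds
    have T2 := ((tendsto_const_nhds : Tendsto (fun _ : ℝ => (2:ℝ))
      (nhdsWithin 0 (Set.Ioi 0)) (nhds 2)).mul T).div TQ hQ₀0
    have hval : 2 * (g 0 / ((m + 1) * (m + 2))) / Q₀ 0 = 2 := by
      rw [hgdef]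
      simp only [mul_zero, sub_zero, zero_mul, add_zero]
      field_simp
    rw [hval] at T2
    apply T2.congr'
    filter_upwards [eventually_mem_nhdsWithin] with μ hμ
    have hμ0 : (0:ℝ) < μ := hμ
    rw [hφ μ hμ0, hInt μ hμ0, hQ μ]
    have hμne : μ ≠ 0 := ne_of_gt hμ0
    have hQμne : Q₀ μ ≠ 0 := ne_of_gt (hQ₀pos μ hμ0.le)
    have hpne : μ ^ (m + 2 - 1) ≠ 0 := pow_ne_zero _ hμne
    have hpne2 : μ ^ (m + 2) ≠ 0 := pow_ne_zero _ hμne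
    simp only [Pi.div_apply]
    rw [show m + 2 - 1 = m + 1 by omega] at hpne ⊢
    field_simp
    rw [show m + 2 = (m + 1) + 1 from rfl, pow_succ, pow_succ]
    ring
  refine ⟨?_, key2⟩
  have Tid : Tendsto (fun μ : ℝ => μ) (nhdsWithin 0 (Set.Ioi 0)) (nhds 0) :=
    (continuous_id.tendsto 0).mono_left nhdsWithin_le_nhds
  have := key2.mul Tid
  rw [mul_zero] at this
  apply this.congr'
  filter_upwards [eventually_mem_nhdsWithin] with μ hμ
  have hμ0 : (0:ℝ) < μ := hμ
  field_simp
end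

section
/- Let Q be a polynomial positive on [0,∞) with Q(0) = 1, and R continuous on [0,∞) with R(μ) → R(∞) ∈ ℝ as μ → ∞. Define P₁(μ) = μ + ∫₀^μ (μ−x)(R(x) − R(∞)) Q(x) dx and P₂(μ) = ∫₀^μ (μ−x) Q(x) dx, and the function C(μ) = R(∞) + P₁(μ)/P₂(μ) for μ > 0. Then C(μ) → +∞ as μ → 0⁺, C is bounded below on (0,∞), and with φ(μ,c) = (2/Q(μ))(P₁(μ) − (c − R(∞)) P₂(μ)), one has φ(μ,c) > 0 for all μ > 0 if and only if c < C(μ) for all μ > 0; hence sup{c : φ(·,c) > 0 on (0,∞)} = inf_{μ>0} C(μ). -/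
open Filter

/-- Characterization of the critical scalar curvature c₀: with
P₁, P₂, C(μ) = R(∞) + P₁(μ)/P₂(μ) and φ(μ,c) = (2/Q(μ))(P₁(μ) − (c − R(∞))P₂(μ)),
C tends to +∞ at 0⁺, is bounded below, φ(·,c) > 0 on (0,∞) iff c < C everywhere,
and sup{c : φ(·,c) > 0 on (0,∞)} = inf_{μ>0} C(μ). -/
theorem stmt_17 (p : Polynomial ℝ) (Q R : ℝ → ℝ) (Rinf : ℝ)
    (hQp : ∀ x, Q x = p.eval x) (hQpos : ∀ μ ≥ (0:ℝ), 0 < Q μ) (hQ0 : Q 0 = 1)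
    (hRcont : ContinuousOn R (Set.Ici 0))
    (hRlim : Tendsto R atTop (nhds Rinf))
    (P₁ P₂ C : ℝ → ℝ) (φ : ℝ → ℝ → ℝ)
    (hP₁ : ∀ μ, P₁ μ = μ + ∫ x in (0:ℝ)..μ, (μ - x) * (R x - Rinf) * Q x)
    (hP₂ : ∀ μ, P₂ μ = ∫ x in (0:ℝ)..μ, (μ - x) * Q x)
    (hC : ∀ μ > (0:ℝ), C μ = Rinf + P₁ μ / P₂ μ)
    (hφ : ∀ μ c, φ μ c = (2 / Q μ) * (P₁ μ - (c - Rinf) * P₂ μ)) :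
    Tendsto C (nhdsWithin 0 (Set.Ioi 0)) atTop ∧
      BddBelow (C '' Set.Ioi 0) ∧
      (∀ c : ℝ, (∀ μ > (0:ℝ), 0 < φ μ c) ↔ ∀ μ > (0:ℝ), c < C μ) ∧
      sSup {c : ℝ | ∀ μ > (0:ℝ), 0 < φ μ c} = sInf (C '' Set.Ioi 0) := by
  -- Continuity of Q
  have hQcont : Continuous Q := by
    have : Q = fun x => p.eval x := funext hQp
    rw [this]; exact p.continuous_aeval
  -- Integrability
  have hInt2 : ∀ μ : ℝ, 0 < μ → IntervalIntegrable (fun x => (μ - x) * Q x)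
      MeasureTheory.volume 0 μ :=
    fun μ hμ => (((continuous_const.sub continuous_id).mul hQcont)).intervalIntegrable 0 μ
  have hInt1 : ∀ μ : ℝ, 0 < μ → IntervalIntegrable (fun x => (μ - x) * (R x - Rinf) * Q x)
      MeasureTheory.volume 0 μ := by
    intro μ hμ
    apply ContinuousOn.intervalIntegrable
    rw [Set.uIcc_of_le hμ.le]
    have hsub : Set.Icc (0:ℝ) μ ⊆ Set.Ici 0 := fun x hx => hx.1
    exact (((continuousOn_const.sub continuousOn_id).mul
      ((hRcont.mono hsub).sub continuousOn_const)).mul hQcont.continuousOn)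
  -- Positivity of P₂
  have hP₂pos : ∀ μ : ℝ, 0 < μ → 0 < P₂ μ := by
    intro μ hμ
    rw [hP₂]
    apply intervalIntegral.intervalIntegral_pos_of_pos_on (hInt2 μ hμ) _ hμ
    intro x hx
    exact mul_pos (by linarith [hx.2]) (hQpos x hx.1.le)
  -- Global bound K on |R - Rinf|
  obtain ⟨N, hN⟩ : ∃ N : ℝ, ∀ x ≥ N, |R x - Rinf| ≤ 1 := by
    have := Metric.tendsto_atTop.mp hRlim 1 one_pos
    obtain ⟨N, hN⟩ := this
    exact ⟨N, fun x hx => by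
      have := hN x hx
      rw [Real.dist_eq] at this
      linarith [le_of_lt this]⟩
  obtain ⟨K₀, hK₀⟩ := (isCompact_Icc (a := (0:ℝ)) (b := max N 0)).exists_bound_of_continuousOn
    ((hRcont.mono (fun x hx => hx.1)).sub continuousOn_const)
  set K : ℝ := max K₀ 1 with hKdef
  have hK : ∀ x : ℝ, 0 ≤ x → |R x - Rinf| ≤ K := by
    intro x hx
    rcases le_or_gt x (max N 0) with h | h
    · exact le_trans (hK₀ x ⟨hx, h⟩) (le_max_left _ _)
    · exact le_trans (hN x (le_of_lt (lt_of_le_of_lt (le_max_left _ _) h))) (le_max_right _ _)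
  have hKpos : (0:ℝ) < K := lt_of_lt_of_le one_pos (le_max_right _ _)
  -- Lower bound: P₁ μ ≥ -K * P₂ μ, hence C μ ≥ Rinf - K
  have hP₁lb : ∀ μ : ℝ, 0 < μ → -K * P₂ μ ≤ P₁ μ := by
    intro μ hμ
    rw [hP₁, hP₂]
    have h1 : (∫ x in (0:ℝ)..μ, (μ - x) * (R x - Rinf) * Q x) + K * ∫ x in (0:ℝ)..μ, (μ - x) * Q x
        = ∫ x in (0:ℝ)..μ, ((μ - x) * (R x - Rinf) * Q x + K * ((μ - x) * Q x)) := by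
      rw [intervalIntegral.integral_add (hInt1 μ hμ) ((hInt2 μ hμ).const_mul K)]
      rw [intervalIntegral.integral_const_mul]
    have h2 : 0 ≤ ∫ x in (0:ℝ)..μ, ((μ - x) * (R x - Rinf) * Q x + K * ((μ - x) * Q x)) := by
      apply intervalIntegral.integral_nonneg hμ.le
      intro x hx
      have hQx := (hQpos x hx.1).le
      have hμx : 0 ≤ μ - x := by linarith [hx.2]
      have hRx : -(K) ≤ R x - Rinf := by
        have := hK x hx.1
        rw [abs_le] at this; exact this.1
      nlinarith [mul_nonneg hμx hQx]
    nlinarith [hμ.le]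
  have hClb : ∀ μ : ℝ, 0 < μ → Rinf - K ≤ C μ := by
    intro μ hμ
    rw [hC μ hμ]
    have h := hP₁lb μ hμ
    have h2 : -K ≤ P₁ μ / P₂ μ := by
      rw [le_div_iff₀ (hP₂pos μ hμ)]; linarith [h]
    linarith
  -- The pointwise equivalence
  have hiff : ∀ c : ℝ, ∀ μ : ℝ, 0 < μ → (0 < φ μ c ↔ c < C μ) := by
    intro c μ hμ
    rw [hφ, hC μ hμ]
    have hQμ := hQpos μ hμ.le
    have hP₂μ := hP₂pos μ hμ
    constructor
    · intro h
      have h2 : 0 < P₁ μ - (c - Rinf) * P₂ μ := by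
        by_contra hcon
        push_neg at hcon
        nlinarith [div_pos two_pos hQμ]
      have : c - Rinf < P₁ μ / P₂ μ := by
        rw [lt_div_iff₀ hP₂μ]; linarith [h2]
      linarith
    · intro h
      have h2 : c - Rinf < P₁ μ / P₂ μ := by linarith
      rw [lt_div_iff₀ hP₂μ] at h2
      exact mul_pos (div_pos two_pos hQμ) (by linarith)
  -- Bounds near 0 for the tendsto
  obtain ⟨M₁, hM₁⟩ := (isCompact_Icc (a := (0:ℝ)) (b := 1)).exists_bound_of_continuousOn
    (((hRcont.mono (fun x hx => hx.1)).sub continuousOn_const).mul hQcont.continuousOn)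
  obtain ⟨M₂, hM₂⟩ := (isCompact_Icc (a := (0:ℝ)) (b := 1)).exists_bound_of_continuousOn
    hQcont.continuousOn
  have hM₂1 : 1 ≤ M₂ := by
    have := hM₂ 0 ⟨le_refl 0, zero_le_one⟩
    rwa [hQ0, norm_one] at this
  have hM₂pos : (0:ℝ) < M₂ := lt_of_lt_of_le one_pos hM₂1
  set M₁' : ℝ := max M₁ 0 + 1 with hM₁'def
  have hM₁'pos : (0:ℝ) < M₁' := by positivity
  set δ : ℝ := min 1 (1 / (2 * M₁')) with hδdef
  have hδpos : 0 < δ := lt_min one_pos (by positivity)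
  -- for μ ∈ (0, δ): C μ ≥ Rinf + (2*M₂)⁻¹ * μ⁻¹
  have hkey : ∀ μ ∈ Set.Ioo (0:ℝ) δ, Rinf + (2 * M₂)⁻¹ * μ⁻¹ ≤ C μ := by
    intro μ hμ
    obtain ⟨hμ0, hμδ⟩ := hμ
    have hμ1 : μ ≤ 1 := le_of_lt (lt_of_lt_of_le hμδ (min_le_left _ _))
    have hμM : μ ≤ 1 / (2 * M₁') := le_of_lt (lt_of_lt_of_le hμδ (min_le_right _ _))
    -- bound on the P₁ integral
    have hb1 : ‖∫ x in (0:ℝ)..μ, (μ - x) * (R x - Rinf) * Q x‖ ≤ μ * M₁' * |μ - 0| := by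
      apply intervalIntegral.norm_integral_le_of_norm_le_const
      intro x hx
      rw [Set.uIoc_of_le hμ0.le] at hx
      have hx01 : x ∈ Set.Icc (0:ℝ) 1 := ⟨hx.1.le, le_trans hx.2 hμ1⟩
      have h1 : ‖(R x - Rinf) * Q x‖ ≤ M₁' := by
        refine le_trans (hM₁ x hx01) ?_
        rw [hM₁'def]
        have := le_max_left M₁ (0:ℝ); linarith
      have h2 : ‖(μ - x)‖ ≤ μ := by
        rw [Real.norm_eq_abs, abs_of_nonneg (by linarith [hx.2])]
        linarith [hx.1]
      calc ‖(μ - x) * (R x - Rinf) * Q x‖ = ‖μ - x‖ * ‖(R x - Rinf) * Q x‖ := by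
            rw [mul_assoc, norm_mul]
        _ ≤ μ * M₁' := by
            apply mul_le_mul h2 h1 (norm_nonneg _) hμ0.le
    have hP₁μ : μ / 2 ≤ P₁ μ := by
      rw [hP₁]
      rw [sub_zero, abs_of_nonneg hμ0.le] at hb1
      have hμM' : M₁' * μ ≤ 1 / 2 := by
        rw [le_div_iff₀ (by positivity : (0:ℝ) < 2 * M₁')] at hμM
        nlinarith
      rw [Real.norm_eq_abs] at hb1
      have h3 := (abs_le.mp hb1).1
      nlinarith [mul_le_mul_of_nonneg_left hμM' hμ0.le]
    have hb2 : P₂ μ ≤ M₂ * μ ^ 2 := by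
      rw [hP₂]
      have := intervalIntegral.norm_integral_le_of_norm_le_const (C := μ * M₂)
        (f := fun x => (μ - x) * Q x) (a := (0:ℝ)) (b := μ) ?_
      · rw [sub_zero, abs_of_nonneg hμ0.le, Real.norm_eq_abs] at this
        have := abs_le.mp this
        nlinarith [this.2]
      · intro x hx
        rw [Set.uIoc_of_le hμ0.le] at hx
        have hx01 : x ∈ Set.Icc (0:ℝ) 1 := ⟨hx.1.le, le_trans hx.2 hμ1⟩
        have h1 : ‖Q x‖ ≤ M₂ := hM₂ x hx01
        have h2 : ‖(μ - x)‖ ≤ μ := by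
          rw [Real.norm_eq_abs, abs_of_nonneg (by linarith [hx.2])]
          linarith [hx.1]
        calc ‖(μ - x) * Q x‖ = ‖μ - x‖ * ‖Q x‖ := norm_mul _ _
          _ ≤ μ * M₂ := mul_le_mul h2 h1 (norm_nonneg _) hμ0.le
    rw [hC μ hμ0]
    have hdiv : (μ / 2) / (M₂ * μ ^ 2) ≤ P₁ μ / P₂ μ :=
      div_le_div₀ (le_trans (by linarith) hP₁μ) hP₁μ (hP₂pos μ hμ0) hb2
    have heq : (μ / 2) / (M₂ * μ ^ 2) = (2 * M₂)⁻¹ * μ⁻¹ := by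
      field_simp
    linarith [heq ▸ hdiv]
  -- Tendsto
  have htend : Tendsto C (nhdsWithin 0 (Set.Ioi 0)) atTop := by
    have h1 : Tendsto (fun μ : ℝ => Rinf + (2 * M₂)⁻¹ * μ⁻¹)
        (nhdsWithin 0 (Set.Ioi 0)) atTop := by
      apply tendsto_atTop_add_const_left
      exact Tendsto.const_mul_atTop (by positivity) tendsto_inv_nhdsGT_zero
    apply tendsto_atTop_mono' _ _ h1
    filter_upwards [Ioo_mem_nhdsGT_of_mem (Set.mem_Ico.mpr ⟨le_refl 0, hδpos⟩)] with μ hμ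
    exact hkey μ hμ
  -- BddBelow
  have hbdd : BddBelow (C '' Set.Ioi 0) := by
    refine ⟨Rinf - K, ?_⟩
    rintro y ⟨μ, hμ, rfl⟩
    exact hClb μ hμ
  -- iff
  have hiff' : ∀ c : ℝ, (∀ μ > (0:ℝ), 0 < φ μ c) ↔ ∀ μ > (0:ℝ), c < C μ := by
    intro c
    constructor
    · intro h μ hμ; exact (hiff c μ hμ).mp (h μ hμ)
    · intro h μ hμ; exact (hiff c μ hμ).mpr (h μ hμ)
  refine ⟨htend, hbdd, hiff', ?_⟩
  -- sup = inf
  set S : Set ℝ := {c : ℝ | ∀ μ > (0:ℝ), 0 < φ μ c} with hSdef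
  have hS : ∀ c, c ∈ S ↔ ∀ μ > (0:ℝ), c < C μ := fun c => hiff' c
  set m : ℝ := sInf (C '' Set.Ioi 0) with hmdef
  have himne : (C '' Set.Ioi 0).Nonempty := ⟨C 1, ⟨1, Set.mem_Ioi.mpr one_pos, rfl⟩⟩
  have hSne : S.Nonempty := by
    refine ⟨Rinf - K - 1, (hS _).mpr fun μ hμ => ?_⟩
    have := hClb μ hμ; linarith
  have hSbdd : BddAbove S := by
    refine ⟨C 1, fun c hc => ?_⟩
    exact le_of_lt ((hS c).mp hc 1 one_pos)
  apply le_antisymm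
  · apply csSup_le hSne
    intro c hc
    apply le_csInf himne
    rintro y ⟨μ, hμ, rfl⟩
    exact le_of_lt ((hS c).mp hc μ hμ)
  · apply le_of_forall_lt
    intro b hb
    have hmid : (b + m) / 2 ∈ S := by
      apply (hS _).mpr
      intro μ hμ
      have hmle : m ≤ C μ := csInf_le hbdd ⟨μ, hμ, rfl⟩
      linarith
    calc b < (b + m) / 2 := by linarith
      _ ≤ sSup S := le_csSup hSbdd hmid
end
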